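/- Let S = (L, A, <) be an abstract numeration system with L prefix-closed, and let K be a semiring. For f : ℕ → K and w ∈ A*, define f ∘ w : ℕ → K by (f ∘ w)(n) = f(val_S(rep_S(n) w)) if rep_S(n) w ∈ L, and 0 otherwise. Then for all u, v ∈ A* and all f, one has (f ∘ v) ∘ u = f ∘ (u v). -/
import Mathlib

open scoped Classical in
/-- The sequence `f ∘ w` associated with a sequence `f : ℕ → K` and a word `w`:
`(f ∘ w)(n) = f(val_S(rep_S(n) w))` if `rep_S(n) w ∈ L`, and `0` otherwise. -/
noncomputable def circ {A K : Type*} [Semiring K] (L : Set (List A))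
    (rep : ℕ → List A) (val : List A → ℕ) (f : ℕ → K) (w : List A) : ℕ → K :=
  fun n => if rep n ++ w ∈ L then f (val (rep n ++ w)) else 0

/-- Let `S = (L, A, <)` be an abstract numeration system with `L` prefix-closed, and
`rep : ℕ → L`, `val : L → ℕ` the mutually inverse bijections. Then for all words
`u, v ∈ A*` and every sequence `f : ℕ → K`, `(f ∘ v) ∘ u = f ∘ (u v)`. -/
theorem circ_circ {A K : Type*} [Semiring K]
    (L : Set (List A)) (rep : ℕ → List A) (val : List A → ℕ)
    (hmem : ∀ n, rep n ∈ L) (hvr : ∀ n, val (rep n) = n)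
    (hrv : ∀ w ∈ L, rep (val w) = w)
    (hpc : ∀ u v : List A, u ++ v ∈ L → u ∈ L)
    (f : ℕ → K) (u v : List A) :
    circ L rep val (circ L rep val f v) u = circ L rep val f (u ++ v) := by
  funext n
  simp only [circ]
  by_cases h1 : rep n ++ u ∈ L
  · rw [if_pos h1, hrv _ h1, List.append_assoc]
  · rw [if_neg h1, if_neg]
    intro h2
    exact h1 (hpc _ _ (by rwa [List.append_assoc]))
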